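/- Soundness of the rule (ι₂ᵗ): if @_{j1} ιx̄ φ and @_{j2} φ[x̄/j2] are jointly satisfiable in a tense model M at time t under assignment v, then M, t, v ⊨ @_{j1} j2, i.e., I(j1) = I(j2). -/

import Mathlib

namespace FOHTL

/-- Object-level terms: free individual variables and constants. -/
inductive Trm
  | var : ℕ → Trm
  | const : ℕ → Trm
deriving DecidableEq

/-- Formulas of first-order hybrid tense logic with definite descriptions. -/
inductive Fm
  | bot : Fm
  | pred : ℕ → List Trm → Fm
  | eq : Trm → Trm → Fm
  | nomf : ℕ → Fm                      -- nominal as formula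
  | tvarf : ℕ → Fm                     -- tense variable as formula
  | neg : Fm → Fm
  | conj : Fm → Fm → Fm
  | fut : Fm → Fm                      -- F
  | past : Fm → Fm                     -- P
  | ex : ℕ → Fm → Fm                   -- ∃x φ
  | lam : ℕ → Fm → Trm → Fm            -- (λx ψ)(b)
  | lamDesc : ℕ → Fm → ℕ → Fm → Fm     -- (λx ψ)(ιy φ)
  | tdesc : ℕ → Fm → Fm                -- ιx̄ φ
  | satNom : ℕ → Fm → Fm               -- @_j φ
  | satTvar : ℕ → Fm → Fm              -- @_x̄ φ
  | satDesc : ℕ → Fm → Fm → Fm         -- @_{ιx̄φ} ψ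
  | down : ℕ → Fm → Fm                 -- ↓_x̄ φ

def Fm.or (φ ψ : Fm) : Fm := .neg (.conj (.neg φ) (.neg ψ))

/-- A tense first-order model. -/
structure Model where
  T : Type
  D : Type
  tne : Nonempty T
  dne : Nonempty D
  prec : T → T → Prop
  In : ℕ → T                 -- interpretation of nominals
  Ic : ℕ → D                 -- interpretation of constants
  Ip : ℕ → T → List D → Prop -- interpretation of predicates at time instances

/-- An assignment for individual and tense variables. -/
structure Asg (M : Model) where
  va : ℕ → M.D
  vt : ℕ → M.T

def Asg.updV {M : Model} (v : Asg M) (x : ℕ) (o : M.D) : Asg M :=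
  ⟨fun n => if n = x then o else v.va n, v.vt⟩

def Asg.updT {M : Model} (v : Asg M) (x : ℕ) (s : M.T) : Asg M :=
  ⟨v.va, fun n => if n = x then s else v.vt n⟩

def Model.trmI (M : Model) (v : Asg M) : Trm → M.D
  | .var n => v.va n
  | .const c => M.Ic c

/-- Satisfaction `M, t, v ⊨ φ`. -/
def Sat (M : Model) : Fm → M.T → Asg M → Prop
  | .bot, _, _ => False
  | .pred P args, t, v => M.Ip P t (args.map (M.trmI v))
  | .eq t1 t2, _, v => M.trmI v t1 = M.trmI v t2
  | .nomf i, t, _ => t = M.In i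
  | .tvarf x, t, v => t = v.vt x
  | .neg φ, t, v => ¬ Sat M φ t v
  | .conj φ ψ, t, v => Sat M φ t v ∧ Sat M ψ t v
  | .fut φ, t, v => ∃ s, M.prec t s ∧ Sat M φ s v
  | .past φ, t, v => ∃ s, M.prec s t ∧ Sat M φ s v
  | .ex x φ, t, v => ∃ o, Sat M φ t (v.updV x o)
  | .lam x ψ b, t, v => Sat M ψ t (v.updV x (M.trmI v b))
  | .lamDesc x ψ y φ, t, v =>
      ∃ o, Sat M φ t (v.updV y o) ∧ Sat M ψ t (v.updV x o) ∧
        ∀ o', Sat M φ t (v.updV y o') → o' = o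
  | .tdesc x φ, t, v =>
      Sat M φ t (v.updT x t) ∧ ∀ s, Sat M φ s (v.updT x s) → s = t
  | .satNom i φ, _, v => Sat M φ (M.In i) v
  | .satTvar x φ, _, v => Sat M φ (v.vt x) v
  | .satDesc x φ ψ, _, v =>
      ∃ s, (Sat M φ s (v.updT x s) ∧ ∀ s', Sat M φ s' (v.updT x s') → s' = s) ∧
        Sat M ψ s v
  | .down x φ, t, v => Sat M φ t (v.updT x t)

def Trm.substV (x : ℕ) (b : Trm) : Trm → Trm
  | .var n => if n = x then b else .var n
  | .const c => .const c

/-- Substitution of the term `b` for the individual variable `x`. -/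
def Fm.substV (x : ℕ) (b : Trm) : Fm → Fm
  | .bot => .bot
  | .pred P args => .pred P (args.map (Trm.substV x b))
  | .eq t1 t2 => .eq (t1.substV x b) (t2.substV x b)
  | .nomf i => .nomf i
  | .tvarf y => .tvarf y
  | .neg φ => .neg (φ.substV x b)
  | .conj φ ψ => .conj (φ.substV x b) (ψ.substV x b)
  | .fut φ => .fut (φ.substV x b)
  | .past φ => .past (φ.substV x b)
  | .ex y φ => .ex y (if y = x then φ else φ.substV x b)
  | .lam y ψ t => .lam y (if y = x then ψ else ψ.substV x b) (t.substV x b)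
  | .lamDesc y ψ z φ =>
      .lamDesc y (if y = x then ψ else ψ.substV x b) z (if z = x then φ else φ.substV x b)
  | .tdesc y φ => .tdesc y (φ.substV x b)
  | .satNom i φ => .satNom i (φ.substV x b)
  | .satTvar y φ => .satTvar y (φ.substV x b)
  | .satDesc y φ ψ => .satDesc y (φ.substV x b) (ψ.substV x b)
  | .down y φ => .down y (φ.substV x b)

/-- Substitution of the nominal `i` for the tense variable `x`. -/
def Fm.substT (x i : ℕ) : Fm → Fm
  | .bot => .bot
  | .pred P args => .pred P args
  | .eq t1 t2 => .eq t1 t2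
  | .nomf j => .nomf j
  | .tvarf y => if y = x then .nomf i else .tvarf y
  | .neg φ => .neg (φ.substT x i)
  | .conj φ ψ => .conj (φ.substT x i) (ψ.substT x i)
  | .fut φ => .fut (φ.substT x i)
  | .past φ => .past (φ.substT x i)
  | .ex y φ => .ex y (φ.substT x i)
  | .lam y ψ t => .lam y (ψ.substT x i) t
  | .lamDesc y ψ z φ => .lamDesc y (ψ.substT x i) z (φ.substT x i)
  | .tdesc y φ => .tdesc y (if y = x then φ else φ.substT x i)
  | .satNom j φ => .satNom j (φ.substT x i)
  | .satTvar y φ =>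
      if y = x then .satNom i (φ.substT x i) else .satTvar y (φ.substT x i)
  | .satDesc y φ ψ => .satDesc y (if y = x then φ else φ.substT x i) (ψ.substT x i)
  | .down y φ => .down y (if y = x then φ else φ.substT x i)

/-- Replacement of the nominal `i` by the tense variable `x`. -/
def Fm.substNomT (i x : ℕ) : Fm → Fm
  | .bot => .bot
  | .pred P args => .pred P args
  | .eq t1 t2 => .eq t1 t2
  | .nomf j => if j = i then .tvarf x else .nomf j
  | .tvarf y => .tvarf y
  | .neg φ => .neg (φ.substNomT i x)
  | .conj φ ψ => .conj (φ.substNomT i x) (ψ.substNomT i x)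
  | .fut φ => .fut (φ.substNomT i x)
  | .past φ => .past (φ.substNomT i x)
  | .ex y φ => .ex y (φ.substNomT i x)
  | .lam y ψ t => .lam y (ψ.substNomT i x) t
  | .lamDesc y ψ z φ => .lamDesc y (ψ.substNomT i x) z (φ.substNomT i x)
  | .tdesc y φ => .tdesc y (if y = x then φ else φ.substNomT i x)
  | .satNom j φ =>
      if j = i then .satTvar x (φ.substNomT i x) else .satNom j (φ.substNomT i x)
  | .satTvar y φ => .satTvar y (φ.substNomT i x)
  | .satDesc y φ ψ => .satDesc y (if y = x then φ else φ.substNomT i x) (ψ.substNomT i x)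
  | .down y φ => .down y (if y = x then φ else φ.substNomT i x)

def Trm.vars : Trm → Set ℕ
  | .var n => {n}
  | .const _ => ∅

/-- Free individual variables of a formula. -/
def Fm.freeV : Fm → Set ℕ
  | .bot => ∅
  | .pred _ args => {n | ∃ t ∈ args, n ∈ t.vars}
  | .eq t1 t2 => t1.vars ∪ t2.vars
  | .nomf _ => ∅
  | .tvarf _ => ∅
  | .neg φ => φ.freeV
  | .conj φ ψ => φ.freeV ∪ ψ.freeV
  | .fut φ => φ.freeV
  | .past φ => φ.freeV
  | .ex y φ => φ.freeV \ {y}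
  | .lam y ψ t => (ψ.freeV \ {y}) ∪ t.vars
  | .lamDesc y ψ z φ => (ψ.freeV \ {y}) ∪ (φ.freeV \ {z})
  | .tdesc _ φ => φ.freeV
  | .satNom _ φ => φ.freeV
  | .satTvar _ φ => φ.freeV
  | .satDesc _ φ ψ => φ.freeV ∪ ψ.freeV
  | .down _ φ => φ.freeV

/-- All individual variables occurring in a formula (free or bound). -/
def Fm.varsOcc : Fm → Set ℕ
  | .bot => ∅
  | .pred _ args => {n | ∃ t ∈ args, n ∈ t.vars}
  | .eq t1 t2 => t1.vars ∪ t2.vars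
  | .nomf _ => ∅
  | .tvarf _ => ∅
  | .neg φ => φ.varsOcc
  | .conj φ ψ => φ.varsOcc ∪ ψ.varsOcc
  | .fut φ => φ.varsOcc
  | .past φ => φ.varsOcc
  | .ex y φ => insert y φ.varsOcc
  | .lam y ψ t => insert y (ψ.varsOcc ∪ t.vars)
  | .lamDesc y ψ z φ => insert y (insert z (ψ.varsOcc ∪ φ.varsOcc))
  | .tdesc _ φ => φ.varsOcc
  | .satNom _ φ => φ.varsOcc
  | .satTvar _ φ => φ.varsOcc
  | .satDesc _ φ ψ => φ.varsOcc ∪ ψ.varsOcc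
  | .down _ φ => φ.varsOcc

/-- Free tense variables of a formula. -/
def Fm.freeT : Fm → Set ℕ
  | .bot => ∅
  | .pred _ _ => ∅
  | .eq _ _ => ∅
  | .nomf _ => ∅
  | .tvarf y => {y}
  | .neg φ => φ.freeT
  | .conj φ ψ => φ.freeT ∪ ψ.freeT
  | .fut φ => φ.freeT
  | .past φ => φ.freeT
  | .ex _ φ => φ.freeT
  | .lam _ ψ _ => ψ.freeT
  | .lamDesc _ ψ _ φ => ψ.freeT ∪ φ.freeT
  | .tdesc y φ => φ.freeT \ {y}
  | .satNom _ φ => φ.freeT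
  | .satTvar y φ => insert y φ.freeT
  | .satDesc y φ ψ => (φ.freeT \ {y}) ∪ ψ.freeT
  | .down y φ => φ.freeT \ {y}

/-- Nominals occurring in a formula. -/
def Fm.noms : Fm → Set ℕ
  | .bot => ∅
  | .pred _ _ => ∅
  | .eq _ _ => ∅
  | .nomf j => {j}
  | .tvarf _ => ∅
  | .neg φ => φ.noms
  | .conj φ ψ => φ.noms ∪ ψ.noms
  | .fut φ => φ.noms
  | .past φ => φ.noms
  | .ex _ φ => φ.noms
  | .lam _ ψ _ => ψ.noms
  | .lamDesc _ ψ _ φ => ψ.noms ∪ φ.noms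
  | .tdesc _ φ => φ.noms
  | .satNom j φ => insert j φ.noms
  | .satTvar _ φ => φ.noms
  | .satDesc _ φ ψ => φ.noms ∪ ψ.noms
  | .down _ φ => φ.noms

/-- Update the interpretation of a single nominal. -/
def Model.updNom (M : Model) (i : ℕ) (s : M.T) : Model :=
  { M with In := fun j => if j = i then s else M.In j }

lemma Asg.updT_va {M : Model} (v : Asg M) (x : ℕ) (s : M.T) :
    (v.updT x s).va = v.va := rfl

lemma trmI_updT {M : Model} (v : Asg M) (x : ℕ) (s : M.T) (t : Trm) :
    M.trmI (v.updT x s) t = M.trmI v t := by cases t <;> rfl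

lemma updT_updT_same {M : Model} (v : Asg M) (x : ℕ) (s s' : M.T) :
    (v.updT x s).updT x s' = v.updT x s' := by
  unfold Asg.updT; simp only [Asg.mk.injEq, true_and]
  funext n; by_cases h : n = x <;> simp [h]

lemma updT_updT_comm {M : Model} (v : Asg M) (x y : ℕ) (hxy : y ≠ x) (s s' : M.T) :
    (v.updT x s).updT y s' = (v.updT y s').updT x s := by
  unfold Asg.updT; simp only [Asg.mk.injEq, true_and]
  funext n; by_cases h1 : n = y <;> by_cases h2 : n = x <;> simp_all

lemma updV_updT {M : Model} (v : Asg M) (x y : ℕ) (o : M.D) (s : M.T) :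
    (v.updT x s).updV y o = (v.updV y o).updT x s := rfl

lemma substT_sat {M : Model} (x i : ℕ) :
    ∀ (φ : Fm) (s : M.T) (v : Asg M),
      Sat M (φ.substT x i) s v ↔ Sat M φ s (v.updT x (M.In i)) := by
  intro φ
  induction φ with
  | bot => intro s v; exact Iff.rfl
  | pred P args =>
      intro s v
      simp only [Fm.substT, Sat]
      have : args.map (M.trmI (v.updT x (M.In i))) = args.map (M.trmI v) := by
        apply List.map_congr_left; intro t _; exact trmI_updT v x _ t
      rw [this]
  | eq t1 t2 =>
      intro s v; simp only [Fm.substT, Sat, trmI_updT]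
  | nomf j => intro s v; exact Iff.rfl
  | tvarf y =>
      intro s v
      by_cases h : y = x <;> simp [Fm.substT, Sat, h, Asg.updT]
  | neg φ ih => intro s v; simp [Fm.substT, Sat, ih]
  | conj φ ψ ih1 ih2 => intro s v; simp [Fm.substT, Sat, ih1, ih2]
  | fut φ ih => intro s v; simp [Fm.substT, Sat, ih]
  | past φ ih => intro s v; simp [Fm.substT, Sat, ih]
  | ex y φ ih =>
      intro s v; simp only [Fm.substT, Sat]
      exact exists_congr fun o => by rw [ih, updV_updT]
  | lam y ψ t ih =>
      intro s v; simp only [Fm.substT, Sat]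
      rw [ih, updV_updT, trmI_updT]
  | lamDesc y ψ z φ ih1 ih2 =>
      intro s v; simp only [Fm.substT, Sat]
      refine exists_congr fun o => ?_
      rw [ih2, ih1, updV_updT, updV_updT]
      refine and_congr Iff.rfl (and_congr Iff.rfl (forall_congr' fun o' => ?_))
      rw [ih2, updV_updT]
  | tdesc y φ ih =>
      intro s v
      by_cases h : y = x
      · subst h
        simp [Fm.substT, Sat, updT_updT_same]
      · simp only [Fm.substT, if_neg h, Sat, ih, fun v => updT_updT_comm (M := M) v x y h]
  | satNom j φ ih => intro s v; simp only [Fm.substT, Sat]; exact ih _ v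
  | satTvar y φ ih =>
      intro s v
      by_cases h : y = x
      · subst h
        simp only [Fm.substT, if_pos rfl, if_true, Sat]
        rw [ih]
        have : (v.updT y (M.In i)).vt y = M.In i := by simp [Asg.updT]
        rw [this]
      · simp only [Fm.substT, if_neg h, Sat]
        rw [ih]
        have : (v.updT x (M.In i)).vt y = v.vt y := by simp [Asg.updT, h]
        rw [this]
  | satDesc y φ ψ ih1 ih2 =>
      intro s v
      by_cases h : y = x
      · subst h
        simp only [Fm.substT, Sat, updT_updT_same, if_pos]
        exact exists_congr fun s' => and_congr Iff.rfl (ih2 _ v)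
      · simp only [Fm.substT, if_neg h, Sat, ih1, ih2,
          fun v => updT_updT_comm (M := M) v x y h]
  | down y φ ih =>
      intro s v
      by_cases h : y = x
      · subst h
        simp [Fm.substT, Sat, updT_updT_same]
      · simp only [Fm.substT, if_neg h, Sat, ih, fun v => updT_updT_comm (M := M) v x y h]

/-- Soundness of the rule (ι₂ᵗ): if `@_{j1} ιx̄ φ` and `@_{j2} φ[x̄/j2]` are
jointly satisfied in `M` at `t` under `v`, then `M,t,v ⊨ @_{j1} j2`. -/
theorem iota2t_sound (j1 j2 x : ℕ) (φ : Fm)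
    (M : Model) (t : M.T) (v : Asg M)
    (h1 : Sat M (.satNom j1 (.tdesc x φ)) t v)
    (h2 : Sat M (.satNom j2 (φ.substT x j2)) t v) :
    Sat M (.satNom j1 (.nomf j2)) t v := by
  simp only [Sat] at h1 h2 ⊢
  obtain ⟨_, huniq⟩ := h1
  exact (huniq (M.In j2) ((substT_sat x j2 φ _ v).mp h2)).symm

end FOHTL
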